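/- arXiv:2507.04307 — 7 statements merged into one kernel-verified Lean document; each statement's English description precedes it below -/
import Mathlib

section
/- Let Ω ⊂ ℝ be a bounded open set and λ > π²/|Ω|². Then the Riesz mean of order 1 satisfies ∑_{k : λ_k(Ω)<λ} (λ − λ_k(Ω)) ≤ (2|Ω|/(3π)) λ^{3/2} (1 − 3π/(16|Ω|√λ)). -/
open Real MeasureTheory

lemma riesz_core (n x : ℝ) (hn : 1 ≤ n) (hx : n ≤ x) :
    n * x ^ 2 - n * (n + 1) * (2 * n + 1) / 6 ≤ 2 / 3 * x ^ 3 - x ^ 2 / 8 := by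
  nlinarith [mul_nonneg (sq_nonneg (x - n - 1/8)) (by linarith : (0:ℝ) ≤ x),
    mul_nonneg (sq_nonneg (x - n - 1/8)) (by linarith : (0:ℝ) ≤ n),
    sq_nonneg (n - 1), sq_nonneg (x - n)]

lemma riesz_sum_sq (N : ℕ) :
    ∑ k ∈ Finset.range N, ((k : ℝ) + 1) ^ 2
      = (N : ℝ) * ((N : ℝ) + 1) * (2 * (N : ℝ) + 1) / 6 := by
  induction N with
  | zero => simp
  | succ n ih => rw [Finset.sum_range_succ, ih]; push_cast; ring

set_option maxHeartbeats 1000000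

/-- For a bounded open set `Ω ⊂ ℝ` with measure `L = |Ω| > 0`,
whose Dirichlet eigenvalues `lam` (listed in increasing order, `lam k` being the
(k+1)-th eigenvalue) satisfy `λ_k ≥ π² k² / L²`, and for any `Λ > π²/L²`, the
Riesz mean of order 1 satisfies
`∑_{k : λ_k < Λ} (Λ - λ_k) ≤ (2L/(3π)) Λ^{3/2} (1 - 3π/(16 L √Λ))`. -/
theorem riesz_mean_one_dim_one
    (Ω : Set ℝ) (hΩo : IsOpen Ω) (hΩb : Bornology.IsBounded Ω)
    (L : ℝ) (hL : L = (volume Ω).toReal) (hLpos : 0 < L)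
    (lam : ℕ → ℝ) (hmono : Monotone lam)
    (hlam : ∀ k : ℕ, π ^ 2 * ((k : ℝ) + 1) ^ 2 / L ^ 2 ≤ lam k)
    (Λ : ℝ) (hΛ : π ^ 2 / L ^ 2 < Λ) :
    ∑' k : ℕ, max (Λ - lam k) 0 ≤
      2 * L / (3 * π) * Λ ^ ((3 : ℝ) / 2) * (1 - 3 * π / (16 * L * Real.sqrt Λ)) := by
  have hπ : 0 < π := Real.pi_pos
  have hΛpos : 0 < Λ := lt_trans (by positivity) hΛ
  set s : ℝ := Real.sqrt Λ with hs_def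
  have hs_sq : s ^ 2 = Λ := Real.sq_sqrt hΛpos.le
  have hs_pos : 0 < s := Real.sqrt_pos.mpr hΛpos
  have hsgt : π / L < s := by
    rw [hs_def]
    exact (Real.lt_sqrt (by positivity)).mpr (by rw [div_pow]; exact hΛ)
  set x : ℝ := s * L / π with hx_def
  have hx1 : 1 < x := by
    have h := mul_lt_mul_of_pos_right hsgt hLpos
    rw [div_mul_cancel₀ _ hLpos.ne'] at h
    rw [hx_def, lt_div_iff₀ hπ]
    linarith
  have hx0 : 0 < x := by linarith
  have hs_eq : s = π * x / L := by rw [hx_def]; field_simp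
  have hΛx : Λ = π ^ 2 / L ^ 2 * x ^ 2 := by
    rw [← hs_sq, hs_eq]; field_simp
  set N : ℕ := Nat.floor x with hN_def
  have hNx : (N : ℝ) ≤ x := Nat.floor_le hx0.le
  have hxN : x < (N : ℝ) + 1 := Nat.lt_floor_add_one x
  have hN1 : 1 ≤ N := Nat.le_floor (by exact_mod_cast hx1.le)
  have hN1' : (1 : ℝ) ≤ (N : ℝ) := by exact_mod_cast hN1
  -- terms vanish for k ≥ N
  have hzero : ∀ k ∉ Finset.range N, max (Λ - lam k) 0 = 0 := by
    intro k hk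
    have hk' : N ≤ k := by simpa using hk
    have hkx : x < (k : ℝ) + 1 := by
      have : (N : ℝ) ≤ (k : ℝ) := by exact_mod_cast hk'
      linarith
    have hlt : Λ < π ^ 2 * ((k : ℝ) + 1) ^ 2 / L ^ 2 := by
      rw [hΛx]
      have hsq : x ^ 2 < ((k : ℝ) + 1) ^ 2 := by nlinarith
      calc π ^ 2 / L ^ 2 * x ^ 2 < π ^ 2 / L ^ 2 * ((k : ℝ) + 1) ^ 2 :=
        mul_lt_mul_of_pos_left hsq (by positivity)
      _ = π ^ 2 * ((k : ℝ) + 1) ^ 2 / L ^ 2 := by ring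
    have := hlam k
    exact max_eq_right (by linarith)
  rw [tsum_eq_sum hzero]
  -- termwise bound
  have hstep : ∑ k ∈ Finset.range N, max (Λ - lam k) 0
      ≤ ∑ k ∈ Finset.range N, (Λ - π ^ 2 * ((k : ℝ) + 1) ^ 2 / L ^ 2) := by
    apply Finset.sum_le_sum
    intro k hk
    have hk' : k < N := Finset.mem_range.mp hk
    have hkx : (k : ℝ) + 1 ≤ x := by
      have : (k : ℝ) + 1 ≤ (N : ℝ) := by exact_mod_cast hk'
      linarith
    have hle : π ^ 2 * ((k : ℝ) + 1) ^ 2 / L ^ 2 ≤ Λ := by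
      rw [hΛx]
      have hsq : ((k : ℝ) + 1) ^ 2 ≤ x ^ 2 := by nlinarith
      calc π ^ 2 * ((k : ℝ) + 1) ^ 2 / L ^ 2 = π ^ 2 / L ^ 2 * ((k : ℝ) + 1) ^ 2 := by ring
      _ ≤ π ^ 2 / L ^ 2 * x ^ 2 := mul_le_mul_of_nonneg_left hsq (by positivity)
    exact max_le (by linarith [hlam k]) (by linarith)
  refine hstep.trans ?_
  -- evaluate the sum
  rw [Finset.sum_sub_distrib, Finset.sum_const, Finset.card_range, nsmul_eq_mul]
  have hsum : ∑ k ∈ Finset.range N, π ^ 2 * ((k : ℝ) + 1) ^ 2 / L ^ 2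
      = π ^ 2 / L ^ 2 * ((N : ℝ) * ((N : ℝ) + 1) * (2 * (N : ℝ) + 1) / 6) := by
    rw [← riesz_sum_sq N, Finset.mul_sum]
    apply Finset.sum_congr rfl
    intro k _; ring
  rw [hsum]
  -- rewrite RHS
  have hr : Λ ^ ((3 : ℝ) / 2) = s ^ 3 := by
    rw [hs_def, Real.sqrt_eq_rpow, ← Real.rpow_natCast (Λ ^ ((1:ℝ)/2)) 3,
      ← Real.rpow_mul hΛpos.le]
    norm_num
  rw [hr]
  have hrhs : 2 * L / (3 * π) * s ^ 3 * (1 - 3 * π / (16 * L * s))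
      = 2 * L / (3 * π) * s ^ 3 - s ^ 2 / 8 := by
    field_simp
    ring
  rw [hrhs]
  -- final algebra: substitute s = π x / L and use core inequality
  have hcore := riesz_core (N : ℝ) x hN1' hNx
  have hfac : (0:ℝ) < π ^ 2 / L ^ 2 := by positivity
  have hs3 : 2 * L / (3 * π) * s ^ 3 = π ^ 2 / L ^ 2 * (2 / 3 * x ^ 3) := by
    rw [hs_eq]; field_simp
  have hs2 : s ^ 2 / 8 = π ^ 2 / L ^ 2 * (x ^ 2 / 8) := by
    rw [hs_eq]; field_simp
  rw [hΛx, hs3, hs2]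
  nlinarith [mul_le_mul_of_nonneg_left hcore hfac.le]
end

section
/- Let I ⊂ ℝ be a bounded open interval and λ > π²/|I|². Then ∑_{k : λ_k(I)<λ} (λ − λ_k(I))^{1/2} ≥ (|I|/4)λ (1 − 2π/(|I|√λ) + π²/(|I|²λ)), where λ_k(I) = π²k²/|I|². -/
/-!
With `μ = L√Λ/π > 1` the `k`-th term is `(π/L)·√(μ² - (k+1)²)` and the claimed lower bound is
`(π/L)·π(μ-1)²/4`. The disc of radius `μ - 1` about `(1, 0)` lies in the disc of radius `μ`
about the origin, so `√((μ-1)² - j²) ≤ √(μ² - (j+1)²)`; and since `t ↦ √((μ-1)² - t²)` is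
antitone on `[0, ∞)`, its values at `j = 0, 1, …` dominate its integral over `[0, μ - 1]`, the
area `π(μ-1)²/4` of a quarter disc. As `Real.sqrt` vanishes on negative numbers, the truncation
`max · 0` in the sum is harmless.
-/

open Real Finset

theorem Real.sqrt_max_zero (a : ℝ) : √(max a 0) = √a := by
  rcases le_total a 0 with h | h <;> simp [h, sqrt_eq_zero_of_nonpos]

theorem integral_sqrt_one_sub_sq_zero_one : ∫ x in (0:ℝ)..1, √(1 - x ^ 2) = π / 4 := by
  have hint : ∀ a b : ℝ, IntervalIntegrable (fun x : ℝ => √(1 - x ^ 2)) MeasureTheory.volume a b :=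
    fun a b => by apply Continuous.intervalIntegrable; fun_prop
  have hneg : ∫ x in (-1:ℝ)..0, √(1 - x ^ 2) = ∫ x in (0:ℝ)..1, √(1 - x ^ 2) := by
    have h := intervalIntegral.integral_comp_neg (a := 0) (b := 1) (fun x : ℝ => √(1 - x ^ 2))
    simp only [neg_sq, neg_zero] at h
    exact h.symm
  have h := integral_sqrt_one_sub_sq
  rw [← intervalIntegral.integral_add_adjacent_intervals (hint (-1) 0) (hint 0 1), hneg] at h
  linarith

theorem integral_sqrt_sq_sub_sq {r : ℝ} (hr : 0 ≤ r) :
    ∫ t in (0:ℝ)..r, √(r ^ 2 - t ^ 2) = π * r ^ 2 / 4 := by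
  rcases hr.eq_or_lt with rfl | hr
  · simp
  have hscale : ∀ t, √(r ^ 2 - t ^ 2) = r * √(1 - (t / r) ^ 2) := fun t => by
    rw [show r ^ 2 - t ^ 2 = r ^ 2 * (1 - (t / r) ^ 2) by field_simp, sqrt_mul (sq_nonneg r),
      sqrt_sq hr.le]
  simp_rw [hscale]
  rw [intervalIntegral.integral_const_mul,
    intervalIntegral.integral_comp_div (fun u => √(1 - u ^ 2)) hr.ne', zero_div,
    div_self hr.ne', integral_sqrt_one_sub_sq_zero_one, smul_eq_mul]
  ring

theorem mul_sq_div_four_le_sum_sqrt_sq_sub_sq {r : ℝ} (hr : 0 ≤ r) {N : ℕ} (hN : r ≤ N) :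
    π * r ^ 2 / 4 ≤ ∑ j ∈ range N, √(r ^ 2 - j ^ 2) := by
  set f := fun t : ℝ => √(r ^ 2 - t ^ 2) with hf
  have hf_anti : AntitoneOn f (Set.Icc 0 (0 + N)) := fun x hx _ _ hxy =>
    sqrt_le_sqrt (by nlinarith [hx.1])
  calc π * r ^ 2 / 4 = ∫ t in (0:ℝ)..r, f t := (integral_sqrt_sq_sub_sq hr).symm
    _ ≤ ∫ t in (0:ℝ)..N, f t :=
        intervalIntegral.integral_mono_interval le_rfl hr hN
          (Filter.Eventually.of_forall fun t => sqrt_nonneg _)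
          (by apply Continuous.intervalIntegrable; fun_prop)
    _ ≤ ∑ j ∈ range N, f (0 + j) := by simpa using hf_anti.integral_le_sum
    _ = ∑ j ∈ range N, √(r ^ 2 - j ^ 2) := by simp [hf]

theorem sqrt_sub_one_sq_sub_sq_le {μ x : ℝ} (hμ : 1 ≤ μ) (hx : 0 ≤ x) :
    √((μ - 1) ^ 2 - x ^ 2) ≤ √(μ ^ 2 - (x + 1) ^ 2) := by
  rcases le_total (x + 1) μ with h | h
  · exact sqrt_le_sqrt (by nlinarith)
  · rw [sqrt_eq_zero_of_nonpos (by nlinarith)]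
    exact sqrt_nonneg _

theorem mul_sub_one_sq_div_four_le_tsum_sqrt {μ : ℝ} (hμ : 1 ≤ μ) :
    π * (μ - 1) ^ 2 / 4 ≤ ∑' k : ℕ, √(μ ^ 2 - ((k : ℝ) + 1) ^ 2) := by
  set N := ⌈μ⌉₊
  have hμN : μ ≤ N := Nat.le_ceil μ
  have hvanish : ∀ k ∉ range N, √(μ ^ 2 - ((k : ℝ) + 1) ^ 2) = 0 := fun k hk => by
    have hNk : (N : ℝ) ≤ k := by exact_mod_cast not_lt.1 (mem_range.not.1 hk)
    exact sqrt_eq_zero_of_nonpos (by nlinarith)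
  rw [tsum_eq_sum hvanish]
  calc π * (μ - 1) ^ 2 / 4 ≤ ∑ k ∈ range N, √((μ - 1) ^ 2 - (k : ℝ) ^ 2) :=
        mul_sq_div_four_le_sum_sqrt_sq_sub_sq (by linarith) (by linarith)
    _ ≤ _ := sum_le_sum fun k _ => sqrt_sub_one_sq_sub_sq_le hμ k.cast_nonneg

/-- For a bounded open interval `I = (a,b)` of length `L = b - a`,
whose Dirichlet eigenvalues are exactly `λ_k = π²k²/L²` (k = 1, 2, …), and any
`Λ > π²/L²`:
`∑_{k : λ_k < Λ} (Λ - λ_k)^{1/2} ≥ (L/4)Λ(1 - 2π/(L√Λ) + π²/(L²Λ))`. -/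
theorem riesz_mean_half_interval_lower
    (a b : ℝ) (hab : a < b) (L : ℝ) (hL : L = b - a)
    (Λ : ℝ) (hΛ : π ^ 2 / L ^ 2 < Λ) :
    L / 4 * Λ * (1 - 2 * π / (L * Real.sqrt Λ) + π ^ 2 / (L ^ 2 * Λ)) ≤
      ∑' k : ℕ, Real.sqrt (max (Λ - π ^ 2 * ((k : ℝ) + 1) ^ 2 / L ^ 2) 0) := by
  have hL0 : 0 < L := hL ▸ sub_pos.2 hab
  have hΛ0 : 0 < Λ := (by positivity : 0 ≤ π ^ 2 / L ^ 2).trans_lt hΛ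
  have hπ_lt : π < L * √Λ := by
    rw [← div_lt_iff₀' hL0]
    exact (lt_sqrt (by positivity)).2 (by rwa [div_pow])
  set μ := L * √Λ / π with hμ_def
  have hμ : 1 ≤ μ := (one_le_div pi_pos).2 hπ_lt.le
  have hsq : √Λ ^ 2 = Λ := sq_sqrt hΛ0.le
  have hπμ : π / L * μ = √Λ := by rw [hμ_def]; field_simp
  have hterm : ∀ k : ℕ, √(max (Λ - π ^ 2 * ((k : ℝ) + 1) ^ 2 / L ^ 2) 0)
      = π / L * √(μ ^ 2 - ((k : ℝ) + 1) ^ 2) := fun k => by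
    rw [sqrt_max_zero, ← sqrt_sq (by positivity : 0 ≤ π / L), ← sqrt_mul (sq_nonneg _)]
    congr 1
    linear_combination (-(π / L * μ + √Λ)) * hπμ - hsq
  have hlhs : L / 4 * Λ * (1 - 2 * π / (L * √Λ) + π ^ 2 / (L ^ 2 * Λ))
      = π / L * (π * (μ - 1) ^ 2 / 4) := by
    rw [hμ_def]; field_simp
    linear_combination (2 * π * L - L ^ 2 * √Λ) * hsq
  rw [hlhs, tsum_congr hterm, tsum_mul_left]
  exact mul_le_mul_of_nonneg_left (mul_sub_one_sq_div_four_le_tsum_sqrt hμ) (by positivity)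
end

section
/- For every positive integer m and every x ∈ [0,1), the function g(x) = m + x − ((m+x)² − m²)^{1/2}(1 − x) satisfies g(x) ≥ (m + x)/3. -/
open Real

/-- For every positive integer `m` and every `x ∈ [0,1)`,
`g(x) = m + x - ((m+x)² - m²)^{1/2}(1-x)` satisfies `g(x) ≥ (m+x)/3`. -/
theorem g_lower_bound (m : ℕ) (hm : 1 ≤ m) (x : ℝ) (hx0 : 0 ≤ x) (hx1 : x < 1) :
    ((m : ℝ) + x) / 3 ≤
      (m : ℝ) + x - Real.sqrt (((m : ℝ) + x) ^ 2 - (m : ℝ) ^ 2) * (1 - x) := by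
  have hm1 : (1 : ℝ) ≤ (m : ℝ) := by exact_mod_cast hm
  set s := Real.sqrt (((m : ℝ) + x) ^ 2 - (m : ℝ) ^ 2) with hs
  have hs0 : 0 ≤ s := Real.sqrt_nonneg _
  have hs2 : s ^ 2 = ((m : ℝ) + x) ^ 2 - (m : ℝ) ^ 2 := by
    rw [hs]; exact Real.sq_sqrt (by nlinarith)
  -- key squared inequality: 9 x (2m+x)(1-x)^2 ≤ 4 (m+x)^2
  have hkey : (s * (1 - x)) ^ 2 ≤ (2 * ((m : ℝ) + x) / 3) ^ 2 := by
    have : s ^ 2 = x * (2 * m + x) := by nlinarith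
    have hx1' : (0:ℝ) ≤ 1 - x := by linarith
    nlinarith [sq_nonneg ((m:ℝ) - 1), mul_nonneg (sub_nonneg.2 hm1) hx0,
      mul_nonneg (mul_nonneg (sub_nonneg.2 hm1) hx0) hx0,
      mul_nonneg (mul_nonneg (sub_nonneg.2 hm1) hx0) hx1',
      mul_nonneg hx0 (sq_nonneg (1 - x)), mul_nonneg (mul_nonneg hx0 hx0) hx1',
      mul_nonneg (mul_nonneg (mul_nonneg hx0 hx0) hx0) hx1',
      mul_nonneg (mul_nonneg hx0 hx0) (sq_nonneg (1-x)),
      sq_nonneg (x*(1-x)), sq_nonneg ((m:ℝ)*x - 1), sq_nonneg (3*x-1)]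
  have hsx : 0 ≤ s * (1 - x) := mul_nonneg hs0 (by linarith)
  have h23 : 0 < 2 * ((m : ℝ) + x) / 3 := by linarith
  nlinarith [hkey, hsx, h23]
end

section
/- For a cube Q ⊂ ℝ³ of side length ℓ and every λ > 0, the Dirichlet eigenvalue counting function satisfies N_Q^D(λ) ≥ (ℓ³/(6π²))λ^{3/2} − (3√3 ℓ²/(6π))λ; moreover if λ > 3π²/ℓ² then N_Q^D(λ) ≥ (ℓ³/(6π²))λ^{3/2} − (3√3 ℓ²/(6π))λ + 1. -/
/-!
After rescaling, `N_Q^D(Λ)` counts the positive lattice points `a ∈ ℕ³` with `|a|² < μ`,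
where `μ = Λℓ²/π²`. Around each such `a` place the union of the `2ᵈ` unit cubes
`∏ᵢ ±[aᵢ - 1, aᵢ]`. Every point `x` with `‖x‖ < √μ - √d` lies in the cubes of
`aᵢ = ⌊|xᵢ|⌋ + 1`, because `∑ᵢ (|xᵢ| + 1)² ≤ (‖x‖ + √d)²` by Cauchy–Schwarz. Comparing
volumes gives `2ᵈ N ≥ vol B(0, √μ - √d)`, i.e. `N ≥ (π/6)(√μ - √3)³` for `d = 3`.
Expanding the cube, what exceeds the claimed bound is `(π/6)(9√μ - 3√3)`, which is at
least `1` whenever the claimed bound is positive.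
-/

open Real MeasureTheory Set Metric Fintype
open scoped ENNReal

def positiveLatticePoints (ι : Type*) [Fintype ι] (μ : ℝ) : Set (ι → ℕ) :=
  {a | (∀ i, 0 < a i) ∧ ∑ i, (a i : ℝ) ^ 2 < μ}

def absShell (n : ℕ) : Set ℝ := {y | (n : ℝ) - 1 ≤ |y| ∧ |y| ≤ n}

def shellBox {ι : Type*} (a : ι → ℕ) : Set (EuclideanSpace ℝ ι) :=
  (MeasurableEquiv.toLp 2 (ι → ℝ)).symm ⁻¹' univ.pi fun i => absShell (a i)

lemma volume_absShell_le (n : ℕ) : volume (absShell n) ≤ 2 := by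
  have hsub : absShell n ⊆ Icc (-(n : ℝ)) (1 - n) ∪ Icc ((n : ℝ) - 1) n := by
    rintro y ⟨hlow, hupp⟩
    rcases abs_cases y with ⟨hy, -⟩ | ⟨hy, -⟩
    · exact Or.inr ⟨hy ▸ hlow, hy ▸ hupp⟩
    · exact Or.inl ⟨by linarith, by linarith⟩
  calc volume (absShell n)
      ≤ volume (Icc (-(n : ℝ)) (1 - n)) + volume (Icc ((n : ℝ) - 1) n) :=
        (measure_mono hsub).trans (measure_union_le _ _)
    _ = 2 := by rw [Real.volume_Icc, Real.volume_Icc]; norm_num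

section LatticePoints

variable {ι : Type*} [Fintype ι]

lemma finite_positiveLatticePoints (μ : ℝ) : (positiveLatticePoints ι μ).Finite := by
  refine (Set.Finite.pi fun _ => finite_Iic ⌈μ⌉₊).subset fun a ⟨_, ha⟩ i _ => ?_
  have hsq : (a i : ℝ) ≤ (a i : ℝ) ^ 2 := by exact_mod_cast Nat.le_self_pow two_ne_zero (a i)
  have hsum : (a i : ℝ) ^ 2 ≤ ∑ j, (a j : ℝ) ^ 2 :=
    Finset.single_le_sum (fun j _ => sq_nonneg (a j : ℝ)) (Finset.mem_univ i)
  exact Nat.cast_le.1 ((hsq.trans hsum).trans (ha.le.trans (Nat.le_ceil μ)))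

lemma one_le_card_positiveLatticePoints {μ : ℝ} (h : (card ι : ℝ) < μ) :
    1 ≤ Nat.card (positiveLatticePoints ι μ) := by
  have := (finite_positiveLatticePoints (ι := ι) μ).to_subtype
  have : Nonempty (positiveLatticePoints ι μ) :=
    ⟨⟨fun _ => 1, fun _ => one_pos, by simpa using h⟩⟩
  exact Nat.card_pos

lemma volume_shellBox_le (a : ι → ℕ) : volume (shellBox a) ≤ 2 ^ card ι := by
  rw [shellBox, (EuclideanSpace.volume_preserving_symm_measurableEquiv_toLp ι).measure_preimage_equiv,
    volume_pi_pi]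
  calc ∏ i, volume (absShell (a i)) ≤ ∏ _i : ι, (2 : ℝ≥0∞) :=
        Finset.prod_le_prod' fun i _ => volume_absShell_le (a i)
    _ = 2 ^ card ι := Finset.prod_const _

lemma sum_abs_le_sqrt_card_mul_norm (x : EuclideanSpace ℝ ι) :
    ∑ i, |x i| ≤ √(card ι) * ‖x‖ := by
  rw [← sqrt_sq (norm_nonneg x), ← sqrt_mul (Nat.cast_nonneg _), EuclideanSpace.norm_sq_eq]
  refine le_sqrt_of_sq_le ?_
  simpa [sq_abs] using sq_sum_le_card_mul_sum_sq (s := Finset.univ) (f := fun i => |x i|)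

lemma sum_sq_abs_add_one_le (x : EuclideanSpace ℝ ι) :
    ∑ i, (|x i| + 1) ^ 2 ≤ (‖x‖ + √(card ι)) ^ 2 := by
  have hcs := sum_abs_le_sqrt_card_mul_norm x
  have hexpand : ∑ i, (|x i| + 1) ^ 2 = ‖x‖ ^ 2 + 2 * ∑ i, |x i| + card ι := by
    simp [add_sq, Finset.sum_add_distrib, Finset.mul_sum, EuclideanSpace.norm_sq_eq, sq_abs]
  rw [hexpand, add_sq, sq_sqrt (Nat.cast_nonneg _)]
  nlinarith [norm_nonneg x]

lemma ball_subset_biUnion_shellBox (μ : ℝ) :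
    ball (0 : EuclideanSpace ℝ ι) (√μ - √(card ι)) ⊆
      ⋃ a ∈ (finite_positiveLatticePoints μ).toFinset, shellBox a := by
  intro x hx
  rw [mem_ball_zero_iff] at hx
  set a : ι → ℕ := fun i => ⌊|x i|⌋₊ + 1
  have ha_le (i : ι) : (a i : ℝ) ≤ |x i| + 1 := by
    simpa [a] using Nat.floor_le (abs_nonneg (x i))
  have hμ : 0 < μ := sqrt_pos.1 (by linarith [norm_nonneg x, sqrt_nonneg (card ι : ℝ)])
  have ha_mem : a ∈ positiveLatticePoints ι μ := by
    refine ⟨fun i => Nat.succ_pos _, ?_⟩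
    calc ∑ i, (a i : ℝ) ^ 2 ≤ ∑ i, (|x i| + 1) ^ 2 :=
          Finset.sum_le_sum fun i _ => pow_le_pow_left₀ (Nat.cast_nonneg _) (ha_le i) 2
      _ ≤ (‖x‖ + √(card ι)) ^ 2 := sum_sq_abs_add_one_le x
      _ < √μ ^ 2 := by gcongr; linarith
      _ = μ := sq_sqrt hμ.le
  refine mem_biUnion ((finite_positiveLatticePoints μ).mem_toFinset.2 ha_mem) fun i _ => ?_
  exact show x i ∈ absShell (a i) from
    ⟨by linarith [ha_le i], by simpa [a] using (Nat.lt_floor_add_one |x i|).le⟩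

lemma volume_ball_le_card_mul (μ : ℝ) :
    volume (ball (0 : EuclideanSpace ℝ ι) (√μ - √(card ι))) ≤
      Nat.card (positiveLatticePoints ι μ) * 2 ^ card ι := by
  have hfin := finite_positiveLatticePoints (ι := ι) μ
  calc volume (ball (0 : EuclideanSpace ℝ ι) (√μ - √(card ι)))
      ≤ volume (⋃ a ∈ hfin.toFinset, shellBox a) := measure_mono (ball_subset_biUnion_shellBox μ)
    _ ≤ ∑ a ∈ hfin.toFinset, volume (shellBox a) := measure_biUnion_finset_le _ _
    _ ≤ ∑ _a ∈ hfin.toFinset, (2 : ℝ≥0∞) ^ card ι :=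
        Finset.sum_le_sum fun a _ => volume_shellBox_le a
    _ = Nat.card (positiveLatticePoints ι μ) * 2 ^ card ι := by
        rw [Finset.sum_const, nsmul_eq_mul, Nat.card_eq_card_finite_toFinset hfin]

end LatticePoints

lemma pi_div_six_mul_cube_le_card (μ : ℝ) :
    π / 6 * (√μ - √3) ^ 3 ≤ Nat.card (positiveLatticePoints (Fin 3) μ) := by
  rcases le_or_gt (√μ - √3) 0 with hr | hr
  · exact (mul_nonpos_of_nonneg_of_nonpos (by positivity) (Odd.pow_nonpos (by decide) hr)).trans
      (Nat.cast_nonneg _)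
  · have hvol := volume_ball_le_card_mul (ι := Fin 3) μ
    rw [EuclideanSpace.volume_ball_fin_three, card_fin, Nat.cast_ofNat,
      ← ENNReal.ofReal_pow hr.le, ← ENNReal.ofReal_mul (by positivity),
      ENNReal.ofReal_le_iff_le_toReal (by finiteness)] at hvol
    simp only [ENNReal.toReal_mul, ENNReal.toReal_natCast, ENNReal.toReal_pow,
      ENNReal.toReal_ofNat] at hvol
    linarith

lemma cubic_add_one_le_max (R : ℝ) :
    π / 6 * R ^ 3 - √3 * π / 2 * R ^ 2 + 1 ≤ max 1 (π / 6 * (R - √3) ^ 3) := by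
  have hq : √3 ^ 2 = 3 := sq_sqrt (by norm_num)
  have hq0 : 0 < √3 := by positivity
  rcases le_or_gt R (3 * √3) with hR | hR
  · refine le_max_of_le_left ?_
    nlinarith [mul_nonneg (mul_nonneg pi_pos.le (sq_nonneg R)) (sub_nonneg.2 hR)]
  · refine le_max_of_le_right ?_
    have hexpand : (R - √3) ^ 3 = R ^ 3 - 3 * √3 * R ^ 2 + 3 * (3 * R - √3) := by
      linear_combination (3 * R - √3) * hq
    have hlin : 8 < 3 * R - √3 := by nlinarith
    have hpi : 2 ≤ π * (3 * R - √3) := by nlinarith [pi_gt_three]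
    rw [hexpand]
    linarith

def finThreeArrowEquiv (α : Type*) : (Fin 3 → α) ≃ α × α × α where
  toFun a := (a 0, a 1, a 2)
  invFun t := ![t.1, t.2.1, t.2.2]
  left_inv a := by ext i; fin_cases i <;> rfl
  right_inv _ := rfl

lemma card_triples_eq_card_positiveLatticePoints {ℓ : ℝ} (hℓ : ℓ ≠ 0) (Λ : ℝ) :
    Nat.card {t : ℕ × ℕ × ℕ // 0 < t.1 ∧ 0 < t.2.1 ∧ 0 < t.2.2 ∧
        π ^ 2 * ((t.1 : ℝ) ^ 2 + (t.2.1 : ℝ) ^ 2 + (t.2.2 : ℝ) ^ 2) / ℓ ^ 2 < Λ} =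
      Nat.card (positiveLatticePoints (Fin 3) (Λ * ℓ ^ 2 / π ^ 2)) := by
  refine Nat.card_congr ((finThreeArrowEquiv ℕ).subtypeEquiv fun a => ?_).symm
  simp only [positiveLatticePoints, mem_ofPred_eq, Fin.forall_fin_succ, Fin.sum_univ_three,
    finThreeArrowEquiv, IsEmpty.forall_iff, and_true, and_assoc]
  rw [div_lt_iff₀ (by positivity), lt_div_iff₀ (by positivity), mul_comm (π ^ 2)]
  rfl

/-- For a cube `Q ⊂ ℝ³` of side length `ℓ > 0`, with Dirichlet
eigenvalues `π²(a²+b²+c²)/ℓ²` over positive integers `a,b,c` (counted over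
ordered triples): for every `Λ > 0`,
`N_Q^D(Λ) ≥ (ℓ³/(6π²))Λ^{3/2} - (3√3 ℓ²/(6π))Λ`, and moreover if `Λ > 3π²/ℓ²`
then `N_Q^D(Λ) ≥ (ℓ³/(6π²))Λ^{3/2} - (3√3 ℓ²/(6π))Λ + 1`. -/
theorem cube3_counting_lower (ℓ Λ : ℝ) (hℓ : 0 < ℓ) (hΛ : 0 < Λ) :
    (ℓ ^ 3 / (6 * π ^ 2) * Λ ^ ((3 : ℝ) / 2) - 3 * Real.sqrt 3 * ℓ ^ 2 / (6 * π) * Λ ≤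
      (Nat.card {t : ℕ × ℕ × ℕ // 0 < t.1 ∧ 0 < t.2.1 ∧ 0 < t.2.2 ∧
          π ^ 2 * ((t.1 : ℝ) ^ 2 + (t.2.1 : ℝ) ^ 2 + (t.2.2 : ℝ) ^ 2) / ℓ ^ 2 < Λ} : ℝ)) ∧
    (3 * π ^ 2 / ℓ ^ 2 < Λ →
      ℓ ^ 3 / (6 * π ^ 2) * Λ ^ ((3 : ℝ) / 2) - 3 * Real.sqrt 3 * ℓ ^ 2 / (6 * π) * Λ + 1 ≤
        (Nat.card {t : ℕ × ℕ × ℕ // 0 < t.1 ∧ 0 < t.2.1 ∧ 0 < t.2.2 ∧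
            π ^ 2 * ((t.1 : ℝ) ^ 2 + (t.2.1 : ℝ) ^ 2 + (t.2.2 : ℝ) ^ 2) / ℓ ^ 2 < Λ} : ℝ)) := by
  rw [card_triples_eq_card_positiveLatticePoints hℓ.ne']
  set μ := Λ * ℓ ^ 2 / π ^ 2
  set N : ℝ := (Nat.card (positiveLatticePoints (Fin 3) μ) : ℝ)
  have hsqrt : √μ = √Λ * ℓ / π := by
    rw [sqrt_div' _ (sq_nonneg π), sqrt_mul' _ (sq_nonneg ℓ), sqrt_sq hℓ.le, sqrt_sq pi_pos.le]
  have hbound : ℓ ^ 3 / (6 * π ^ 2) * Λ ^ ((3 : ℝ) / 2) - 3 * √3 * ℓ ^ 2 / (6 * π) * Λ =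
      π / 6 * √μ ^ 3 - √3 * π / 2 * √μ ^ 2 := by
    have hΛsq : √Λ ^ 2 = Λ := sq_sqrt hΛ.le
    rw [rpow_div_two_eq_sqrt _ hΛ.le, rpow_ofNat, hsqrt]
    field_simp
    linear_combination 6 * π * √3 * hΛsq
  have hmax : π / 6 * √μ ^ 3 - √3 * π / 2 * √μ ^ 2 + 1 ≤ max 1 N :=
    (cubic_add_one_le_max √μ).trans (max_le_max le_rfl (pi_div_six_mul_cube_le_card μ))
  have hN0 : 0 ≤ N := Nat.cast_nonneg _
  rw [hbound]
  refine ⟨by linarith [max_le (by linarith : 1 ≤ N + 1) (by linarith : N ≤ N + 1)], fun hΛ3 => ?_⟩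
  have h3μ : ((card (Fin 3) : ℕ) : ℝ) < μ := by
    rw [card_fin, Nat.cast_ofNat, lt_div_iff₀ (by positivity)]
    rwa [div_lt_iff₀ (by positivity)] at hΛ3
  have hN : 1 ≤ N := Nat.one_le_cast.2 (one_le_card_positiveLatticePoints h3μ)
  rwa [max_eq_right hN] at hmax
end

section
/- Let Ω ⊂ ℝ be a bounded open set and let p > 1. Then for all λ > λ₁(Ω), ∑_{k : λ_k(Ω)<λ} (λ − λ_k(Ω))^p ≤ (2|Ω|/(3π B(p−1,2))) B(p−1,5/2) λ^{p+1/2} − C₃(p) λ^p, where C₃(p) = 1/9 for 1 < p ≤ 2 and C₃(p) = (1/8)(247/256)^{p−1} for p > 2, and B denotes the Beta function. -/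
open Real MeasureTheory

noncomputable def betaFn (x y : ℝ) : ℝ :=
  Real.Gamma x * Real.Gamma y / Real.Gamma (x + y)

/-!
The identity `(λ - μ)₊ ^ p = p (p - 1) ∫₀^∞ v ^ (p - 2) (λ - μ - v)₊ dv` turns the Riesz mean of
order `p` into an integral of Riesz means of order one. With `ℓ = π / L`, the lower bound
`λₖ ≥ (ℓ (k + 1))²` gives the order-one bound `∑ₖ (μ - λₖ)₊ ≤ 2 μ^{3/2} / (3ℓ) - μ / 8` for
`μ ≥ (3ℓ/16)²`, while all order-one means vanish below `λ₁ ≥ ℓ²`, so only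
`v ∈ [0, v₀]`, `v₀ = Λ - (3ℓ/16)² ≥ 247 Λ / 256`, contributes. Integrating, the main term gives
`Λ^{p+1/2} B(p-1, 5/2)`, and the linear term gives `v₀^{p-1} (p Λ - (p-1) v₀) / 8 ≥ C₃(p) Λ^p`.
-/

open Finset

theorem intervalIntegrable_rpow_mul {r : ℝ} (hr : -1 < r) {g : ℝ → ℝ} (hg : Continuous g)
    (a b : ℝ) : IntervalIntegrable (fun v => v ^ r * g v) volume a b :=
  (intervalIntegral.intervalIntegrable_rpow' hr).mul_continuousOn hg.continuousOn

theorem integral_rpow_mul_sub_rpow_eq_betaFn {a b T : ℝ} (ha : 0 < a) (hb : 0 < b)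
    (hT : 0 < T) :
    ∫ v in (0 : ℝ)..T, v ^ (a - 1) * (T - v) ^ (b - 1) = T ^ (a + b - 1) * betaFn a b := by
  apply Complex.ofReal_injective
  have hcast : ∀ v ∈ Set.uIcc 0 T, ((v ^ (a - 1) * (T - v) ^ (b - 1) : ℝ) : ℂ)
      = (v : ℂ) ^ ((a : ℂ) - 1) * ((T : ℂ) - v) ^ ((b : ℂ) - 1) := by
    intro v hv
    rw [Set.uIcc_of_le hT.le] at hv
    push_cast [Complex.ofReal_cpow hv.1, Complex.ofReal_cpow (sub_nonneg.2 hv.2)]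
    rfl
  rw [← intervalIntegral.integral_ofReal, intervalIntegral.integral_congr hcast,
    Complex.betaIntegral_scaled _ _ hT,
    Complex.betaIntegral_eq_Gamma_mul_div _ _ (by simpa) (by simpa), betaFn]
  push_cast [Complex.ofReal_cpow hT.le, ← Complex.Gamma_ofReal]
  ring

theorem integral_rpow_mul_sub_rpow_le_betaFn {a b c T : ℝ} (ha : 0 < a) (hb : 1 ≤ b)
    (hc : 0 ≤ c) (hcT : c ≤ T) :
    ∫ v in (0 : ℝ)..c, v ^ (a - 1) * (T - v) ^ (b - 1) ≤ T ^ (a + b - 1) * betaFn a b := by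
  rcases (hc.trans hcT).eq_or_lt with rfl | hT
  · rw [le_antisymm hcT hc, intervalIntegral.integral_same]
    exact mul_nonneg (rpow_nonneg le_rfl _) (ProbabilityTheory.beta_pos ha (by linarith)).le
  rw [← integral_rpow_mul_sub_rpow_eq_betaFn ha (by linarith) hT]
  refine intervalIntegral.integral_mono_interval le_rfl hc hcT ?_
    (intervalIntegrable_rpow_mul (by linarith) (by fun_prop (disch := linarith)) _ _)
  filter_upwards [ae_restrict_mem measurableSet_Ioc] with v hv
  exact mul_nonneg (rpow_nonneg hv.1.le _) (rpow_nonneg (sub_nonneg.2 hv.2) _)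

theorem betaFn_two {x : ℝ} (hx : 0 < x) : betaFn x 2 = 1 / (x * (x + 1)) := by
  have hΓ : Gamma (x + 2) = (x + 1) * x * Gamma x := by
    rw [show x + 2 = x + 1 + 1 by ring, Gamma_add_one (by positivity), Gamma_add_one hx.ne']
    ring
  have hΓx := (Gamma_pos_of_pos hx).ne'
  rw [betaFn, hΓ, Gamma_two]
  field_simp

theorem integral_rpow_mul_sub {p c : ℝ} (hp : 1 < p) (hc : 0 ≤ c) (T : ℝ) :
    p * (p - 1) * ∫ v in (0 : ℝ)..c, v ^ (p - 2) * (T - v)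
      = c ^ (p - 1) * (p * T - (p - 1) * c) := by
  have hexpand : ∀ v ∈ Set.uIcc 0 c, v ^ (p - 2) * (T - v) = T * v ^ (p - 2) - v ^ (p - 1) := by
    intro v hv
    rw [Set.uIcc_of_le hc] at hv
    rw [show p - 1 = p - 2 + 1 by ring, rpow_add_one' hv.1 (by linarith)]
    ring
  rw [intervalIntegral.integral_congr hexpand, intervalIntegral.integral_sub
      ((intervalIntegral.intervalIntegrable_rpow' (by linarith)).const_mul T)
      (intervalIntegral.intervalIntegrable_rpow' (by linarith)),
    intervalIntegral.integral_const_mul, integral_rpow (Or.inl (by linarith)),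
    integral_rpow (Or.inl (by linarith)), show p - 2 + 1 = p - 1 by ring,
    sub_add_cancel, zero_rpow (by linarith), zero_rpow (by linarith), sub_zero, sub_zero]
  have hcp : c ^ p = c ^ (p - 1) * c := by
    rw [← rpow_add_one' hc (by norm_num; linarith), sub_add_cancel]
  have hp1 : p - 1 ≠ 0 := by linarith
  rw [hcp]
  field_simp

theorem integral_rpow_mul_max_sub {p c T : ℝ} (hp : 1 < p) (hT : 0 ≤ T) (hcT : c ≤ T) :
    p * (p - 1) * ∫ v in (0 : ℝ)..T, v ^ (p - 2) * max (c - v) 0 = max c 0 ^ p := by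
  have hint : ∀ a b : ℝ, IntervalIntegrable (fun v => v ^ (p - 2) * max (c - v) 0) volume a b :=
    intervalIntegrable_rpow_mul (by linarith) (by fun_prop)
  have hvanish : ∀ a, c ≤ a → a ≤ T → ∀ v ∈ Set.uIcc a T, v ^ (p - 2) * max (c - v) 0 = 0 := by
    intro a hca haT v hv
    rw [Set.uIcc_of_le haT] at hv
    rw [max_eq_right (by linarith [hv.1]), mul_zero]
  rcases le_or_gt c 0 with hc | hc
  · rw [intervalIntegral.integral_congr (hvanish 0 hc hT), intervalIntegral.integral_zero,
      max_eq_right hc, zero_rpow (by linarith), mul_zero]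
  have hlin : ∀ v ∈ Set.uIcc 0 c, v ^ (p - 2) * max (c - v) 0 = v ^ (p - 2) * (c - v) := by
    intro v hv
    rw [Set.uIcc_of_le hc.le] at hv
    rw [max_eq_left (by linarith [hv.2])]
  rw [← intervalIntegral.integral_add_adjacent_intervals (hint 0 c) (hint c T),
    intervalIntegral.integral_congr (hvanish c le_rfl hcT), intervalIntegral.integral_zero,
    add_zero,
    intervalIntegral.integral_congr hlin, integral_rpow_mul_sub hp hc.le, max_eq_left hc.le,
    show p * c - (p - 1) * c = c by ring, ← rpow_add_one' hc.le (by norm_num; linarith),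
    sub_add_cancel]

theorem sum_max_sub_rpow_eq_integral {ι : Type*} (s : Finset ι) (lam : ι → ℝ) {p Λ T : ℝ}
    (hp : 1 < p) (hT : 0 ≤ T) (hlam : ∀ k ∈ s, Λ - lam k ≤ T) :
    ∑ k ∈ s, max (Λ - lam k) 0 ^ p
      = p * (p - 1) * ∫ v in (0 : ℝ)..T, v ^ (p - 2) * ∑ k ∈ s, max (Λ - v - lam k) 0 := by
  simp_rw [mul_sum]
  rw [intervalIntegral.integral_finsetSum
    fun k _ => intervalIntegrable_rpow_mul (by linarith) (by fun_prop) _ _, mul_sum]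
  refine sum_congr rfl fun k hk => ?_
  rw [← integral_rpow_mul_max_sub hp hT (hlam k hk)]
  simp_rw [sub_right_comm Λ]

theorem sum_range_succ_sq (N : ℕ) :
    ∑ k ∈ range N, ((k : ℝ) + 1) ^ 2 = (N : ℝ) * (N + 1) * (2 * N + 1) / 6 := by
  induction N with
  | zero => simp
  | succ N ih => rw [sum_range_succ, ih]; push_cast; ring

theorem mul_sq_sub_sum_sq_le {N X : ℝ} (hN : 0 ≤ N) (hNX : N ≤ X) (hX : 3 / 16 ≤ X) :
    N * X ^ 2 - N * (N + 1) * (2 * N + 1) / 6 ≤ 2 / 3 * X ^ 3 - X ^ 2 / 8 := by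
  have ht := sub_nonneg.2 hNX
  have hX' := sub_nonneg.2 hX
  nlinarith [mul_nonneg (mul_nonneg ht ht) ht, mul_nonneg (mul_nonneg hN ht) ht, mul_nonneg hX' ht,
    mul_nonneg (mul_nonneg hX' ht) hN, mul_nonneg (mul_nonneg hX' hX') ht, mul_nonneg hN ht]

theorem sum_max_sq_sub_sq_le {X : ℝ} (hX : 3 / 16 ≤ X) (K : ℕ) :
    ∑ k ∈ range K, max (X ^ 2 - ((k : ℝ) + 1) ^ 2) 0 ≤ 2 / 3 * X ^ 3 - X ^ 2 / 8 := by
  set N := ⌊X⌋₊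
  have hX0 : 0 ≤ X := by linarith
  have hvanish : ∀ k ∈ range (max K N), k ∉ range N → max (X ^ 2 - ((k : ℝ) + 1) ^ 2) 0 = 0 := by
    intro k _ hk
    have hNk : (N : ℝ) ≤ k := by exact_mod_cast not_lt.1 (mem_range.not.1 hk)
    have hXk : X < k + 1 := by linarith [Nat.lt_floor_add_one X]
    exact max_eq_right (by nlinarith)
  have hpos : ∀ k ∈ range N, max (X ^ 2 - ((k : ℝ) + 1) ^ 2) 0 = X ^ 2 - ((k : ℝ) + 1) ^ 2 := by
    intro k hk
    have hkN : (k : ℝ) + 1 ≤ N := by exact_mod_cast mem_range.1 hk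
    have hkX : (k : ℝ) + 1 ≤ X := hkN.trans (Nat.floor_le hX0)
    exact max_eq_left (by nlinarith)
  calc ∑ k ∈ range K, max (X ^ 2 - ((k : ℝ) + 1) ^ 2) 0
      ≤ ∑ k ∈ range (max K N), max (X ^ 2 - ((k : ℝ) + 1) ^ 2) 0 :=
        sum_le_sum_of_subset_of_nonneg (range_subset_range.2 (le_max_left _ _))
          fun _ _ _ => le_max_right _ _
    _ = ∑ k ∈ range N, (X ^ 2 - ((k : ℝ) + 1) ^ 2) := by
        rw [← sum_subset (range_subset_range.2 (le_max_right _ _)) hvanish, sum_congr rfl hpos]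
    _ = N * X ^ 2 - N * (N + 1) * (2 * N + 1) / 6 := by
        rw [sum_sub_distrib, sum_const, card_range, sum_range_succ_sq, nsmul_eq_mul]
    _ ≤ 2 / 3 * X ^ 3 - X ^ 2 / 8 :=
        mul_sq_sub_sum_sq_le (Nat.cast_nonneg N) (Nat.floor_le hX0) hX

theorem sum_max_sub_le_of_sq_growth {ℓ μ : ℝ} (hℓ : 0 < ℓ) (hμ : (3 / 16 * ℓ) ^ 2 ≤ μ)
    {lam : ℕ → ℝ} (hlam : ∀ k : ℕ, (ℓ * (k + 1)) ^ 2 ≤ lam k) (K : ℕ) :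
    ∑ k ∈ range K, max (μ - lam k) 0 ≤ 2 / (3 * ℓ) * μ ^ (3 / 2 : ℝ) - μ / 8 := by
  have hμ0 : 0 ≤ μ := (sq_nonneg _).trans hμ
  set X := √μ / ℓ
  have hsqrt : √μ = ℓ * X := (mul_div_cancel₀ _ hℓ.ne').symm
  have hμX : μ = ℓ ^ 2 * X ^ 2 := by rw [← mul_pow, ← hsqrt, sq_sqrt hμ0]
  have hμ32 : μ ^ (3 / 2 : ℝ) = ℓ ^ 3 * X ^ 3 := by
    rw [show (3 / 2 : ℝ) = 1 / 2 * (3 : ℕ) by norm_num, rpow_mul_natCast hμ0, ← sqrt_eq_rpow,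
      hsqrt, mul_pow]
  have hX : 3 / 16 ≤ X := by
    rw [le_div_iff₀ hℓ]
    exact le_sqrt_of_sq_le hμ
  calc ∑ k ∈ range K, max (μ - lam k) 0
      ≤ ∑ k ∈ range K, ℓ ^ 2 * max (X ^ 2 - ((k : ℝ) + 1) ^ 2) 0 := by
        refine sum_le_sum fun k _ => ?_
        rw [mul_max_of_nonneg _ _ (sq_nonneg ℓ), mul_zero]
        exact max_le_max (by nlinarith [hlam k]) le_rfl
    _ ≤ ℓ ^ 2 * (2 / 3 * X ^ 3 - X ^ 2 / 8) := by
        rw [← mul_sum]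
        exact mul_le_mul_of_nonneg_left (sum_max_sq_sub_sq_le hX K) (sq_nonneg ℓ)
    _ = 2 / (3 * ℓ) * μ ^ (3 / 2 : ℝ) - μ / 8 := by
        rw [hμ32, hμX]
        field_simp

/-- The constant `C₃(p)` of the theorem. -/
noncomputable def rieszConst (p : ℝ) : ℝ :=
  if p ≤ 2 then 1 / 9 else 1 / 8 * (247 / 256) ^ (p - 1)

theorem rieszConst_le {p s : ℝ} (hp : 1 < p) (hs : 247 / 256 ≤ s) (hs1 : s ≤ 1) :
    rieszConst p ≤ s ^ (p - 1) * (p - (p - 1) * s) / 8 := by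
  have hs0 : 0 < s := by linarith
  have hu0 : 0 < s ^ (p - 1) := rpow_pos_of_pos hs0 _
  have hfac : 1 ≤ p - (p - 1) * s := by nlinarith
  unfold rieszConst
  split_ifs with hp2
  · have hu : s ≤ s ^ (p - 1) := by
      simpa using rpow_le_rpow_of_exponent_ge hs0 hs1 (show p - 1 ≤ 1 by linarith)
    nlinarith
  · have hu : (247 / 256 : ℝ) ^ (p - 1) ≤ s ^ (p - 1) := rpow_le_rpow (by norm_num) hs (by linarith)
    nlinarith

theorem rieszConst_mul_rpow_le {p Λ v : ℝ} (hp : 1 < p) (hΛ : 0 < Λ) (hv : 247 / 256 * Λ ≤ v)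
    (hvΛ : v ≤ Λ) :
    rieszConst p * Λ ^ p ≤ v ^ (p - 1) * (p * Λ - (p - 1) * v) / 8 := by
  set s := v / Λ
  have hvs : v = Λ * s := (mul_div_cancel₀ _ hΛ.ne').symm
  have hs : 247 / 256 ≤ s := by rw [le_div_iff₀ hΛ]; linarith
  have hs1 : s ≤ 1 := (div_le_one hΛ).2 hvΛ
  have hΛp : Λ ^ p = Λ ^ (p - 1) * Λ := by
    rw [← rpow_add_one' hΛ.le (by norm_num; linarith), sub_add_cancel]
  calc rieszConst p * Λ ^ p ≤ s ^ (p - 1) * (p - (p - 1) * s) / 8 * Λ ^ p :=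
        mul_le_mul_of_nonneg_right (rieszConst_le hp hs hs1) (rpow_nonneg hΛ.le _)
    _ = v ^ (p - 1) * (p * Λ - (p - 1) * v) / 8 := by
        rw [hvs, mul_rpow hΛ.le (by linarith), hΛp]
        ring

theorem integral_rpow_mul_three_halves_sub_le {p c Λ v₀ : ℝ} (hp : 1 < p) (hc : 0 ≤ c)
    (hv₀ : 0 ≤ v₀) (hv₀Λ : v₀ ≤ Λ) :
    p * (p - 1) * ∫ v in (0 : ℝ)..v₀, v ^ (p - 2) * (c * (Λ - v) ^ (3 / 2 : ℝ) - (Λ - v) / 8)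
      ≤ p * (p - 1) * c * betaFn (p - 1) (5 / 2) * Λ ^ (p + 1 / 2)
        - v₀ ^ (p - 1) * (p * Λ - (p - 1) * v₀) / 8 := by
  have h32 : Continuous fun v : ℝ => (Λ - v) ^ (3 / 2 : ℝ) := by fun_prop (disch := norm_num)
  have hsplit : ∫ v in (0 : ℝ)..v₀, v ^ (p - 2) * (c * (Λ - v) ^ (3 / 2 : ℝ) - (Λ - v) / 8)
      = c * (∫ v in (0 : ℝ)..v₀, v ^ (p - 2) * (Λ - v) ^ (3 / 2 : ℝ))
        - (∫ v in (0 : ℝ)..v₀, v ^ (p - 2) * (Λ - v)) / 8 := by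
    rw [← intervalIntegral.integral_const_mul, ← intervalIntegral.integral_div,
      ← intervalIntegral.integral_sub
        ((intervalIntegrable_rpow_mul (by linarith) h32 _ _).const_mul _)
        ((intervalIntegrable_rpow_mul (by linarith) (by fun_prop) _ _).div_const _)]
    exact intervalIntegral.integral_congr fun v _ => by ring
  have hbeta := integral_rpow_mul_sub_rpow_le_betaFn (a := p - 1) (b := 5 / 2) (by linarith)
    (by norm_num) hv₀ hv₀Λ
  rw [show p - 1 - 1 = p - 2 by ring, show (5 / 2 : ℝ) - 1 = 3 / 2 by norm_num,
    show p - 1 + 5 / 2 - 1 = p + 1 / 2 by ring] at hbeta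
  have hpp : 0 ≤ p * (p - 1) := by nlinarith
  rw [hsplit, mul_sub, mul_div_assoc', integral_rpow_mul_sub hp hv₀]
  have := mul_le_mul_of_nonneg_left hbeta (mul_nonneg hpp hc)
  linarith

theorem sum_max_sub_rpow_le {ℓ p Λ : ℝ} (hℓ : 0 < ℓ) (hp : 1 < p) {lam : ℕ → ℝ}
    (hlam : ∀ k : ℕ, (ℓ * (k + 1)) ^ 2 ≤ lam k) (hΛ : ℓ ^ 2 ≤ Λ) (K : ℕ) :
    ∑ k ∈ range K, max (Λ - lam k) 0 ^ p
      ≤ p * (p - 1) * (2 / (3 * ℓ)) * betaFn (p - 1) (5 / 2) * Λ ^ (p + 1 / 2)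
        - rieszConst p * Λ ^ p := by
  set v₀ := Λ - (3 / 16 * ℓ) ^ 2 with hv₀_def
  have hΛ0 : 0 < Λ := (pow_pos hℓ 2).trans_le hΛ
  have hv₀ : 247 / 256 * Λ ≤ v₀ := by rw [hv₀_def]; linarith
  have hv₀Λ : v₀ ≤ Λ := by rw [hv₀_def]; nlinarith
  have hv₀0 : 0 ≤ v₀ := by linarith
  have hpp : 0 ≤ p * (p - 1) := by nlinarith
  have hlamv₀ : ∀ k ∈ range K, Λ - lam k ≤ v₀ := fun k _ => by
    have hk : ℓ ^ 2 ≤ (ℓ * (k + 1)) ^ 2 :=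
      pow_le_pow_left₀ hℓ.le (le_mul_of_one_le_right hℓ.le (by simp)) 2
    nlinarith [hlam k]
  have hR1 : ∀ v ∈ Set.Icc 0 v₀, v ^ (p - 2) * ∑ k ∈ range K, max (Λ - v - lam k) 0
      ≤ v ^ (p - 2) * (2 / (3 * ℓ) * (Λ - v) ^ (3 / 2 : ℝ) - (Λ - v) / 8) := fun v hv =>
    mul_le_mul_of_nonneg_left (sum_max_sub_le_of_sq_growth hℓ (by linarith [hv.2, hv₀_def]) hlam K)
      (rpow_nonneg hv.1 _)
  calc ∑ k ∈ range K, max (Λ - lam k) 0 ^ p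
      = p * (p - 1) * ∫ v in (0 : ℝ)..v₀, v ^ (p - 2) * ∑ k ∈ range K, max (Λ - v - lam k) 0 :=
        sum_max_sub_rpow_eq_integral _ _ hp hv₀0 hlamv₀
    _ ≤ p * (p - 1) * ∫ v in (0 : ℝ)..v₀,
          v ^ (p - 2) * (2 / (3 * ℓ) * (Λ - v) ^ (3 / 2 : ℝ) - (Λ - v) / 8) :=
        mul_le_mul_of_nonneg_left (intervalIntegral.integral_mono_on hv₀0
          (intervalIntegrable_rpow_mul (by linarith) (by fun_prop) _ _)
          (intervalIntegrable_rpow_mul (by linarith) (by fun_prop (disch := norm_num)) _ _)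
          hR1) hpp
    _ ≤ p * (p - 1) * (2 / (3 * ℓ)) * betaFn (p - 1) (5 / 2) * Λ ^ (p + 1 / 2)
          - v₀ ^ (p - 1) * (p * Λ - (p - 1) * v₀) / 8 :=
        integral_rpow_mul_three_halves_sub_le hp (by positivity) hv₀0 hv₀Λ
    _ ≤ p * (p - 1) * (2 / (3 * ℓ)) * betaFn (p - 1) (5 / 2) * Λ ^ (p + 1 / 2)
          - rieszConst p * Λ ^ p := by
        linarith [rieszConst_mul_rpow_le hp hΛ0 hv₀ hv₀Λ]

theorem exists_forall_le_of_sq_growth {ℓ : ℝ} (hℓ : 0 < ℓ) {lam : ℕ → ℝ}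
    (hlam : ∀ k : ℕ, (ℓ * (k + 1)) ^ 2 ≤ lam k) (Λ : ℝ) : ∃ K : ℕ, ∀ k ≥ K, Λ ≤ lam k := by
  obtain ⟨K, hK⟩ := exists_nat_ge (Λ / ℓ ^ 2)
  refine ⟨K, fun k hk => ?_⟩
  have hkK : (K : ℝ) ≤ k := by exact_mod_cast hk
  calc Λ ≤ ℓ ^ 2 * K := by rwa [div_le_iff₀' (by positivity)] at hK
    _ ≤ (ℓ * (k + 1)) ^ 2 := by
        rw [mul_pow]
        gcongr
        nlinarith [(Nat.cast_nonneg k : (0 : ℝ) ≤ k)]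
    _ ≤ lam k := hlam k

theorem riesz_mean_p_dim_one_general
    (L : ℝ) (hLpos : 0 < L)
    (lam : ℕ → ℝ)
    (hlam : ∀ k : ℕ, π ^ 2 * ((k : ℝ) + 1) ^ 2 / L ^ 2 ≤ lam k)
    (p : ℝ) (hp : 1 < p)
    (Λ : ℝ) (hΛ : lam 0 < Λ) :
    ∑' k : ℕ, (max (Λ - lam k) 0) ^ p ≤
      2 * L / (3 * π * betaFn (p - 1) 2) * betaFn (p - 1) (5 / 2) * Λ ^ (p + 1 / 2) -
        (if p ≤ 2 then (1 : ℝ) / 9 else 1 / 8 * (247 / 256) ^ (p - 1)) * Λ ^ p := by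
  have hℓ : 0 < π / L := by positivity
  have hgrowth : ∀ k : ℕ, (π / L * (k + 1)) ^ 2 ≤ lam k := fun k => by
    convert hlam k using 1
    ring
  have hΛ' : (π / L) ^ 2 ≤ Λ := by simpa using (hgrowth 0).trans hΛ.le
  obtain ⟨K, hK⟩ := exists_forall_le_of_sq_growth hℓ hgrowth Λ
  rw [tsum_eq_sum (s := range K) fun k hk => by
    rw [max_eq_right (by linarith [hK k (by simpa using hk)]), zero_rpow (by linarith)]]
  refine (sum_max_sub_rpow_le hℓ hp hgrowth hΛ' K).trans_eq ?_
  rw [betaFn_two (by linarith), sub_add_cancel, rieszConst]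
  field_simp

/-- For a bounded open `Ω ⊂ ℝ` with `L = |Ω| > 0`, Dirichlet
eigenvalues `lam` in increasing order (`lam k` the (k+1)-th, so `lam 0 = λ₁`)
satisfying `λ_k ≥ π²k²/L²`, `p > 1`, and `Λ > λ₁(Ω)`:
`∑_{λ_k<Λ} (Λ-λ_k)^p ≤ (2L/(3π B(p-1,2))) B(p-1,5/2) Λ^{p+1/2} - C₃(p) Λ^p`,
with `C₃(p) = 1/9` for `1 < p ≤ 2` and `C₃(p) = (1/8)(247/256)^{p-1}` for `p > 2`. -/
theorem riesz_mean_p_dim_one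
    (Ω : Set ℝ) (hΩo : IsOpen Ω) (hΩb : Bornology.IsBounded Ω)
    (L : ℝ) (hL : L = (volume Ω).toReal) (hLpos : 0 < L)
    (lam : ℕ → ℝ) (hmono : Monotone lam)
    (hlam : ∀ k : ℕ, π ^ 2 * ((k : ℝ) + 1) ^ 2 / L ^ 2 ≤ lam k)
    (p : ℝ) (hp : 1 < p)
    (Λ : ℝ) (hΛ : lam 0 < Λ) :
    ∑' k : ℕ, (max (Λ - lam k) 0) ^ p ≤
      2 * L / (3 * π * betaFn (p - 1) 2) * betaFn (p - 1) (5 / 2) * Λ ^ (p + 1 / 2) -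
        (if p ≤ 2 then (1 : ℝ) / 9 else 1 / 8 * (247 / 256) ^ (p - 1)) * Λ ^ p :=
  riesz_mean_p_dim_one_general L hLpos lam hlam p hp Λ hΛ
end

section
/- Let Ω₁ ⊂ ℝ² satisfy Pólya's conjecture N_{Ω₁}^D(λ) ≤ (|Ω₁|ω(2)/(2π)²)λ for all λ, and let Ω₂ ⊂ ℝ be bounded open. Then for all λ > 0, the product Ω = Ω₁ × Ω₂ ⊂ ℝ³ satisfies N_Ω^D(λ) ≤ (|Ω|ω(3)/(2π)³) λ^{3/2} (1 − 3π/(16|Ω₂|√λ))_+. -/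
/-!
Counting the eigenvalues `λ_k(Ω₁) + λ_j(Ω₂) < Λ` of the product along the second index bounds
`N_Ω(Λ)` by `∑_j N_{Ω₁}(Λ - λ_j(Ω₂))`, so Pólya's inequality for `Ω₁` bounds it by `|Ω₁|/(4π)`
times the Riesz mean `∑_j (Λ - λ_j(Ω₂))_+`. As `λ_j(Ω₂) ≥ π²(j+1)²/|Ω₂|²`, this Riesz mean is at
most that of an interval of length `|Ω₂|`, which with `t = |Ω₂|√Λ/π` is
`(π/|Ω₂|)² ∑_{j+1 ≤ t} (t² - (j+1)²)`; summing the squares bounds it by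
`(π/|Ω₂|)² (2t³/3 - t²/8)`.
-/

open Real Finset

section Counting

variable {ι : Type*} {lam : ι → ℝ} {c : ℝ}

theorem nonneg_of_card_lt_le_mul (hfin : ∀ x, {i | lam i < x}.Finite)
    (hc : ∀ x, 0 < x → (Nat.card {i // lam i < x} : ℝ) ≤ c * x) (i : ι) : 0 ≤ lam i := by
  by_contra! hi
  set ε := 1 / (|c| + 1)
  have hε : 0 < ε := by positivity
  have : Finite {k // lam k < ε} := (hfin ε).to_subtype
  have : Nonempty {k // lam k < ε} := ⟨⟨i, hi.trans hε⟩⟩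
  have hone : (1 : ℝ) ≤ Nat.card {k // lam k < ε} := by exact_mod_cast Nat.card_pos
  have hsmall : c * ε < 1 :=
    calc c * ε ≤ |c| * ε := by gcongr; exact le_abs_self c
      _ < 1 := by rw [mul_one_div, div_lt_one (by positivity)]; linarith
  linarith [hc ε hε]

theorem card_lt_le_mul_max (hfin : ∀ x, {i | lam i < x}.Finite)
    (hc : ∀ x, 0 < x → (Nat.card {i // lam i < x} : ℝ) ≤ c * x) (x : ℝ) :
    (Nat.card {i // lam i < x} : ℝ) ≤ c * max x 0 := by
  rcases le_or_gt x 0 with hx | hx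
  · have : IsEmpty {i // lam i < x} :=
      ⟨fun i => (hx.trans (nonneg_of_card_lt_le_mul hfin hc i)).not_gt i.2⟩
    simp [max_eq_right hx]
  · rw [max_eq_left hx.le]
    exact hc x hx

theorem card_add_lt_le_sum {κ : Type*} (lam₁ : ι → ℝ) (lam₂ : κ → ℝ)
    (hfin : ∀ x, {i | lam₁ i < x}.Finite) (h0 : ∀ i, 0 ≤ lam₁ i) {Λ : ℝ} (s : Finset κ)
    (hs : ∀ j, lam₂ j < Λ → j ∈ s) :
    Nat.card {q : ι × κ // lam₁ q.1 + lam₂ q.2 < Λ} ≤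
      ∑ j ∈ s, Nat.card {i // lam₁ i < Λ - lam₂ j} := by
  classical
  let A : κ → Finset ι := fun j => (hfin (Λ - lam₂ j)).toFinset
  have hsub : {q : ι × κ | lam₁ q.1 + lam₂ q.2 < Λ} ⊆ ↑(s.biUnion fun j => A j ×ˢ {j}) := by
    rintro ⟨i, j⟩ (hq : lam₁ i + lam₂ j < Λ)
    simp only [coe_biUnion, Set.mem_iUnion, mem_coe, mem_product, mem_singleton,
      Set.Finite.mem_toFinset, Set.mem_ofPred_eq, A]
    exact ⟨j, hs j (by linarith [h0 i]), by linarith, rfl⟩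
  calc Nat.card {q : ι × κ // lam₁ q.1 + lam₂ q.2 < Λ}
      ≤ Nat.card ↑(s.biUnion fun j => A j ×ˢ {j}) := Nat.card_mono (finite_toSet _) hsub
    _ = (s.biUnion fun j => A j ×ˢ {j}).card := Nat.card_eq_finsetCard _
    _ ≤ ∑ j ∈ s, (A j ×ˢ {j}).card := card_biUnion_le
    _ = ∑ j ∈ s, Nat.card {i // lam₁ i < Λ - lam₂ j} := by
      simp only [card_product, card_singleton, mul_one, A]
      exact sum_congr rfl fun j _ => (Nat.card_eq_card_finite_toFinset _).symm

end Counting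

section Interval

noncomputable def intervalEigenvalue (L : ℝ) (j : ℕ) : ℝ := π ^ 2 * ((j : ℝ) + 1) ^ 2 / L ^ 2

variable {L Λ : ℝ}

theorem intervalEigenvalue_le_iff (hL : 0 < L) (hΛ : 0 ≤ Λ) (j : ℕ) :
    intervalEigenvalue L j ≤ Λ ↔ j < ⌊L * √Λ / π⌋₊ := by
  have hπ := pi_pos
  have h : intervalEigenvalue L j = (((j : ℝ) + 1) * π / L) ^ 2 := by
    rw [intervalEigenvalue]; ring
  rw [h, ← Real.le_sqrt (by positivity) hΛ, div_le_iff₀ hL, Nat.lt_iff_add_one_le,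
    Nat.le_floor_iff (by positivity), le_div_iff₀ hπ, mul_comm (√Λ), Nat.cast_add_one]

theorem sum_range_add_one_sq (n : ℕ) :
    ∑ m ∈ range n, ((m : ℝ) + 1) ^ 2 = (n : ℝ) * (n + 1) * (2 * n + 1) / 6 := by
  induction n with
  | zero => simp
  | succ k ih => rw [sum_range_succ, ih]; push_cast; ring

theorem sum_range_floor_sq_sub_add_one_sq_le {t : ℝ} (ht : 1 ≤ t) :
    ∑ m ∈ range ⌊t⌋₊, (t ^ 2 - ((m : ℝ) + 1) ^ 2) ≤ 2 / 3 * t ^ 3 - t ^ 2 / 8 := by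
  rw [sum_sub_distrib, sum_const, card_range, nsmul_eq_mul, sum_range_add_one_sq]
  have hn : (1 : ℝ) ≤ ⌊t⌋₊ := Nat.one_le_cast.2 (Nat.le_floor (by simpa using ht))
  have hs0 : 0 ≤ t - ⌊t⌋₊ := sub_nonneg.2 (Nat.floor_le (by linarith))
  have hs1 : t - ⌊t⌋₊ < 1 := by linarith [Nat.lt_floor_add_one t]
  generalize (⌊t⌋₊ : ℝ) = n at *
  generalize hs : t - n = s at *
  obtain rfl : t = n + s := by linarith
  -- the difference is `n ((s - 1/8)² + 1/6 - 1/64 + 3n/8) + s² (2s/3 - 1/8)`, and `n ≥ 1 > s`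
  nlinarith [mul_nonneg (by linarith : (0 : ℝ) ≤ n) (sq_nonneg (s - 1 / 8)), pow_nonneg hs0 3,
    mul_le_mul hs1.le hs1.le hs0 zero_le_one]

theorem sum_sub_intervalEigenvalue_le (hL : 0 < L) (hΛ : 0 < Λ) :
    ∑ j ∈ range ⌊L * √Λ / π⌋₊, (Λ - intervalEigenvalue L j) ≤
      2 * L / (3 * π) * Λ ^ ((3 : ℝ) / 2) * max (1 - 3 * π / (16 * L * √Λ)) 0 := by
  have hπ := pi_pos
  have hsqrt : 0 < √Λ := sqrt_pos.2 hΛ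
  set t := L * √Λ / π with ht
  have hsqrt_eq : √Λ = π * t / L := by rw [ht]; field_simp
  have hΛ_eq : Λ = π ^ 2 / L ^ 2 * t ^ 2 := by
    rw [← sq_sqrt hΛ.le, hsqrt_eq]; ring
  have hsum : ∑ j ∈ range ⌊t⌋₊, (Λ - intervalEigenvalue L j) =
      π ^ 2 / L ^ 2 * ∑ j ∈ range ⌊t⌋₊, (t ^ 2 - ((j : ℝ) + 1) ^ 2) := by
    rw [mul_sum]
    refine sum_congr rfl fun j _ => ?_
    rw [intervalEigenvalue, hΛ_eq]
    ring
  rcases lt_or_ge t 1 with ht1 | ht1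
  · rw [Nat.floor_eq_zero.2 ht1, sum_range_zero]
    positivity
  have hmax : max (1 - 3 * π / (16 * L * √Λ)) 0 = 1 - 3 / (16 * t) := by
    rw [max_eq_left, hsqrt_eq]
    · field_simp
    · rw [sub_nonneg, div_le_one (by positivity), hsqrt_eq]
      field_simp
      nlinarith
  have hpow : Λ ^ ((3 : ℝ) / 2) = (π * t / L) ^ 3 := by
    rw [← hsqrt_eq, sqrt_eq_rpow, ← rpow_natCast, ← rpow_mul hΛ.le]
    norm_num
  rw [hsum, hmax, hpow]
  calc π ^ 2 / L ^ 2 * ∑ j ∈ range ⌊t⌋₊, (t ^ 2 - ((j : ℝ) + 1) ^ 2)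
      ≤ π ^ 2 / L ^ 2 * (2 / 3 * t ^ 3 - t ^ 2 / 8) := by
        gcongr
        exact sum_range_floor_sq_sub_add_one_sq_le ht1
    _ = 2 * L / (3 * π) * (π * t / L) ^ 3 * (1 - 3 / (16 * t)) := by
        field_simp
        ring

end Interval

theorem product_counting_dim_three_general
    (L₁ L₂ : ℝ) (hL₂pos : 0 < L₂) (lam1 lam2 : ℕ → ℝ)
    (hfin1 : ∀ Λ : ℝ, {k : ℕ | lam1 k < Λ}.Finite)
    (hP1 : ∀ Λ : ℝ, 0 < Λ →
      (Nat.card {k : ℕ // lam1 k < Λ} : ℝ) ≤ L₁ * π / (2 * π) ^ 2 * Λ)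
    (hlam2 : ∀ k : ℕ, π ^ 2 * ((k : ℝ) + 1) ^ 2 / L₂ ^ 2 ≤ lam2 k)
    (Λ : ℝ) (hΛ : 0 < Λ) :
    (Nat.card {q : ℕ × ℕ // lam1 q.1 + lam2 q.2 < Λ} : ℝ) ≤
      L₁ * L₂ * (4 / 3 * π) / (2 * π) ^ 3 * Λ ^ ((3 : ℝ) / 2) *
        max (1 - 3 * π / (16 * L₂ * Real.sqrt Λ)) 0 := by
  set c := L₁ * π / (2 * π) ^ 2
  have hc : 0 ≤ c := (Nat.cast_nonneg _).trans ((hP1 1 one_pos).trans_eq (mul_one c))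
  have hlam1 := nonneg_of_card_lt_le_mul hfin1 hP1
  have hlam2_lt : ∀ j, lam2 j < Λ → j ∈ range ⌊L₂ * √Λ / π⌋₊ := fun j hj =>
    mem_range.2 ((intervalEigenvalue_le_iff hL₂pos hΛ.le j).1 ((hlam2 j).trans hj.le))
  calc (Nat.card {q : ℕ × ℕ // lam1 q.1 + lam2 q.2 < Λ} : ℝ)
      ≤ ∑ j ∈ range ⌊L₂ * √Λ / π⌋₊, (Nat.card {k // lam1 k < Λ - lam2 j} : ℝ) := by
        exact_mod_cast card_add_lt_le_sum lam1 lam2 hfin1 hlam1 _ hlam2_lt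
    _ ≤ ∑ j ∈ range ⌊L₂ * √Λ / π⌋₊, c * (Λ - intervalEigenvalue L₂ j) := by
        gcongr with j hj
        refine (card_lt_le_mul_max hfin1 hP1 _).trans (mul_le_mul_of_nonneg_left ?_ hc)
        exact max_le (sub_le_sub_left (hlam2 j) Λ)
          (sub_nonneg.2 ((intervalEigenvalue_le_iff hL₂pos hΛ.le j).2 (mem_range.1 hj)))
    _ = c * ∑ j ∈ range ⌊L₂ * √Λ / π⌋₊, (Λ - intervalEigenvalue L₂ j) := (mul_sum _ _ _).symm
    _ ≤ c * (2 * L₂ / (3 * π) * Λ ^ ((3 : ℝ) / 2) * max (1 - 3 * π / (16 * L₂ * √Λ)) 0) := by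
        gcongr
        exact sum_sub_intervalEigenvalue_le hL₂pos hΛ
    _ = _ := by
        simp only [c]
        field_simp
        ring

/-- Let `Ω₁ ⊂ ℝ²` be a bounded open set of measure `L₁ > 0`
whose Dirichlet eigenvalues `lam1` (increasing, with finitely many below any
threshold) satisfy Pólya's conjecture `N_{Ω₁}^D(Λ) ≤ (L₁ ω(2)/(2π)²) Λ`
(`ω(2) = π`), and let `Ω₂ ⊂ ℝ` be bounded open of measure `L₂ > 0` with
Dirichlet eigenvalues `lam2` satisfying `λ_j ≥ π²j²/L₂²`.  Then the product
`Ω = Ω₁ × Ω₂ ⊂ ℝ³`, whose spectrum consists of the sums `lam1 i + lam2 j`,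
satisfies for all `Λ > 0`:
`N_Ω^D(Λ) ≤ (L₁L₂ ω(3)/(2π)³) Λ^{3/2} (1 - 3π/(16L₂√Λ))_+` with `ω(3) = 4π/3`. -/
theorem product_counting_dim_three
    (Ω₁ : Set (ℝ × ℝ)) (h1o : IsOpen Ω₁) (h1b : Bornology.IsBounded Ω₁)
    (Ω₂ : Set ℝ) (h2o : IsOpen Ω₂) (h2b : Bornology.IsBounded Ω₂)
    (L₁ L₂ : ℝ) (hL₁ : L₁ = (MeasureTheory.volume Ω₁).toReal)
    (hL₂ : L₂ = (MeasureTheory.volume Ω₂).toReal)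
    (hL₁pos : 0 < L₁) (hL₂pos : 0 < L₂)
    (lam1 lam2 : ℕ → ℝ) (hmono1 : Monotone lam1) (hmono2 : Monotone lam2)
    (hfin1 : ∀ Λ : ℝ, {k : ℕ | lam1 k < Λ}.Finite)
    (hP1 : ∀ Λ : ℝ, 0 < Λ →
      (Nat.card {k : ℕ // lam1 k < Λ} : ℝ) ≤ L₁ * π / (2 * π) ^ 2 * Λ)
    (hlam2 : ∀ k : ℕ, π ^ 2 * ((k : ℝ) + 1) ^ 2 / L₂ ^ 2 ≤ lam2 k)
    (Λ : ℝ) (hΛ : 0 < Λ) :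
    (Nat.card {q : ℕ × ℕ // lam1 q.1 + lam2 q.2 < Λ} : ℝ) ≤
      L₁ * L₂ * (4 / 3 * π) / (2 * π) ^ 3 * Λ ^ ((3 : ℝ) / 2) *
        max (1 - 3 * π / (16 * L₂ * Real.sqrt Λ)) 0 :=
  product_counting_dim_three_general L₁ L₂ hL₂pos lam1 lam2 hfin1 hP1 hlam2 Λ hΛ
end

section
/- Let λ > π²/|Ω|² and set k_λ = ⌊|Ω|√λ/π⌋. Then ∑_{k=1}^{k_λ} (λ − π²k²/|Ω|²) ≤ (2|Ω|/(3π)) λ^{3/2} − (k_λ/(|Ω|√λ/π))² · λ/2, and since k_λ ≥ (|Ω|√λ/π)/2, also ∑_{k=1}^{k_λ}(λ − π²k²/|Ω|²) ≤ (2|Ω|/(3π))λ^{3/2} − λ/8. -/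
open Real Finset

/-! In the variable `t = L√Λ/π` one has `Λ - π²k²/L² = (π/L)² (t² - k²)` and
`Λ^{3/2} = (π/L)³ t³`, so both bounds reduce to `∑_{k ≤ m} (t² - k²) ≤ (2/3) t³ - m²/2`,
which holds for every `m` because after Faulhaber's formula the gap is
`(t - m)²(2t + m)/3 + m/6 ≥ 0`. For the second bound, `⌊t⌋ ≥ t/2` once `t ≥ 1`. -/

theorem sum_Icc_natCast_sq (m : ℕ) :
    ∑ k ∈ Icc 1 m, (k : ℝ) ^ 2 = m * (m + 1) * (2 * m + 1) / 6 := by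
  induction m with
  | zero => simp
  | succ n ih =>
    rw [sum_Icc_succ_top (by omega), ih]
    push_cast
    ring

theorem sum_Icc_sq_sub_sq_le {t : ℝ} (ht : 0 ≤ t) (m : ℕ) :
    ∑ k ∈ Icc 1 m, (t ^ 2 - (k : ℝ) ^ 2) ≤ 2 / 3 * t ^ 3 - (m : ℝ) ^ 2 / 2 := by
  rw [sum_sub_distrib, sum_const, Nat.card_Icc, nsmul_eq_mul, sum_Icc_natCast_sq,
    Nat.add_sub_cancel]
  have hm : (0 : ℝ) ≤ m := m.cast_nonneg
  nlinarith [mul_nonneg (sq_nonneg (t - m)) (by linarith : (0 : ℝ) ≤ 2 * t + m)]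

theorem half_le_natFloor_div_self {t : ℝ} (ht : 1 ≤ t) : 1 / 2 ≤ (⌊t⌋₊ : ℝ) / t := by
  rw [div_le_div_iff₀ two_pos (by linarith)]
  have hfloor : (1 : ℝ) ≤ ⌊t⌋₊ := by exact_mod_cast (Nat.one_le_floor_iff t).mpr ht
  linarith [Nat.lt_floor_add_one t]

theorem sum_Icc_sub_pi_sq_mul_sq_div_le {L Λ : ℝ} (hL : 0 < L) (hΛ : 0 < Λ) (m : ℕ) :
    ∑ k ∈ Icc 1 m, (Λ - π ^ 2 * (k : ℝ) ^ 2 / L ^ 2) ≤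
      2 * L / (3 * π) * Λ ^ ((3 : ℝ) / 2) - ((m : ℝ) / (L * √Λ / π)) ^ 2 * Λ / 2 := by
  set t := L * √Λ / π with ht
  have hsqrt : √Λ = π / L * t := by rw [ht]; field_simp
  have hΛt : Λ = (π / L) ^ 2 * t ^ 2 := by rw [← mul_pow, ← hsqrt, sq_sqrt hΛ.le]
  have hpow : Λ ^ ((3 : ℝ) / 2) = (π / L) ^ 3 * t ^ 3 := by
    rw [rpow_div_two_eq_sqrt _ hΛ.le, show (3 : ℝ) = (3 : ℕ) by norm_num, rpow_natCast, hsqrt,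
      mul_pow]
  have hsum : ∑ k ∈ Icc 1 m, (Λ - π ^ 2 * (k : ℝ) ^ 2 / L ^ 2) =
      (π / L) ^ 2 * ∑ k ∈ Icc 1 m, (t ^ 2 - (k : ℝ) ^ 2) := by
    rw [mul_sum]; refine sum_congr rfl fun k _ => ?_; rw [hΛt]; ring
  have hrhs : 2 * L / (3 * π) * Λ ^ ((3 : ℝ) / 2) - ((m : ℝ) / t) ^ 2 * Λ / 2 =
      (π / L) ^ 2 * (2 / 3 * t ^ 3 - (m : ℝ) ^ 2 / 2) := by
    have ht0 : t ≠ 0 := by positivity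
    rw [hpow, hΛt]; field_simp
  rw [hsum, hrhs]
  exact mul_le_mul_of_nonneg_left (sum_Icc_sq_sub_sq_le (by positivity) m) (by positivity)

/-- For `L > 0` and `Λ > π²/L²`, with `kΛ = ⌊L√Λ/π⌋`:
`∑_{k=1}^{kΛ} (Λ - π²k²/L²) ≤ (2L/(3π))Λ^{3/2} - (kΛ/(L√Λ/π))²·Λ/2`, and also
`∑_{k=1}^{kΛ} (Λ - π²k²/L²) ≤ (2L/(3π))Λ^{3/2} - Λ/8`. -/
theorem riesz_sum_floor_bounds (L Λ : ℝ) (hL : 0 < L) (hΛ : π ^ 2 / L ^ 2 < Λ) :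
    (∑ k ∈ Finset.Icc 1 ⌊L * Real.sqrt Λ / π⌋₊, (Λ - π ^ 2 * (k : ℝ) ^ 2 / L ^ 2) ≤
        2 * L / (3 * π) * Λ ^ ((3 : ℝ) / 2) -
          ((⌊L * Real.sqrt Λ / π⌋₊ : ℝ) / (L * Real.sqrt Λ / π)) ^ 2 * Λ / 2) ∧
      ∑ k ∈ Finset.Icc 1 ⌊L * Real.sqrt Λ / π⌋₊, (Λ - π ^ 2 * (k : ℝ) ^ 2 / L ^ 2) ≤
        2 * L / (3 * π) * Λ ^ ((3 : ℝ) / 2) - Λ / 8 := by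
  have hΛ0 : 0 < Λ := lt_trans (by positivity) hΛ
  have first := sum_Icc_sub_pi_sq_mul_sq_div_le hL hΛ0 ⌊L * √Λ / π⌋₊
  refine ⟨first, first.trans ?_⟩
  have ht1 : 1 ≤ L * √Λ / π := by
    rw [le_div_iff₀ pi_pos, one_mul, ← div_le_iff₀' hL]
    exact (lt_sqrt (by positivity)).mpr (by rwa [div_pow]) |>.le
  have hquarter : (1 / 2) ^ 2 ≤ ((⌊L * √Λ / π⌋₊ : ℝ) / (L * √Λ / π)) ^ 2 :=
    pow_le_pow_left₀ (by norm_num) (half_le_natFloor_div_self ht1) 2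
  linarith [mul_le_mul_of_nonneg_right hquarter hΛ0.le]
end
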